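/- Let (V,∘) be a Novikov algebra over ℂ (possibly infinite-dimensional, with trivial Lie bracket) such that there exists x ∈ V and k ∈ ℂ∖{0} with x∘b = k·b for all b ∈ V. Let (d^i)_{i∈ℕ} be a family of linear maps from V into the space of polynomial maps ℂ → V such that for each a ∈ V one has d^i_λ(a) = 0 for all but finitely many i, and suppose the family satisfies the Novikov conformal derivation equation (E₀). Then d^i = 0 for all i ≥ 2, and for all a, b ∈ V and λ ∈ ℂ: (H1) d^1_λ(b∘a) = d^1_λ(b)∘a; (H2) d^1_λ(a)∗b = d^1_λ(b)∗a; (H3) d^0_λ(b∘a) + λ d^1_λ(b∘a) = b∘d^0_λ(a) − λ(b∘d^1_λ(a)) + d^0_λ(b)∘a; (H4) d^0_λ(b)∘a − λ d^1_λ(b∘a) = d^0_λ(a)∘b − λ(d^1_λ(a)∘b). -/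
import Mathlib


/-- The Novikov conformal derivation equation (E₀) for a pointwise finitely supported
family `(d^i)_{i∈ℕ}` of linear maps from `V` into maps `ℂ → V`, on the quadratic Lie
conformal algebra of the Novikov algebra `(V, circ)` (with trivial Lie bracket);
the formal variable `∂` is evaluated at `x : ℂ`. -/
def ConfDerEqNov {V : Type*} [AddCommGroup V] [Module ℂ V]
    (circ : V →ₗ[ℂ] V →ₗ[ℂ] V) (d : ℕ → V →ₗ[ℂ] (ℂ → V)) : Prop :=
  ∀ (a b : V) (l m x : ℂ),
    (x + l) • (∑ᶠ i : ℕ, x ^ i • d i (circ b a) l)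
      + m • (∑ᶠ i : ℕ, x ^ i • d i (circ a b + circ b a) l)
    = (∑ᶠ i : ℕ, (-l - m) ^ i •
        (x • circ b (d i a l) + (l + m) • (circ (d i a l) b + circ b (d i a l))))
      + (∑ᶠ i : ℕ, (m + x) ^ i •
        (x • circ (d i b l) a + m • (circ (d i b l) a + circ a (d i b l))))


open Finset

set_option linter.unusedSectionVars false
set_option linter.unusedVariables false
set_option maxHeartbeats 1000000

namespace Stmt14Aux

variable {V : Type*} [AddCommGroup V] [Module ℂ V]

def shf (g : ℕ → V) : ℕ → V
  | 0 => 0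
  | (p+1) => g p

@[simp] lemma shf_zero (g : ℕ → V) : shf g 0 = 0 := rfl
@[simp] lemma shf_succ (g : ℕ → V) (p : ℕ) : shf g (p+1) = g p := rfl
@[simp] lemma shf_one (g : ℕ → V) : shf g 1 = g 0 := rfl

lemma two_pow_ne {i N : ℕ} (h : i ≠ N) : (2:ℂ)^i - 2^N ≠ 0 := by
  intro hc
  apply h
  have h1 : (2:ℂ)^i = 2^N := by linear_combination hc
  have h2 : ((2^i : ℕ) : ℂ) = ((2^N : ℕ) : ℂ) := by push_cast; exact h1
  exact Nat.pow_right_injective le_rfl (Nat.cast_injective h2)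

lemma polyext : ∀ (N : ℕ) (v : ℕ → V),
    (∀ x : ℂ, x ≠ 0 → ∑ i ∈ range N, x ^ i • v i = 0) → ∀ i, i < N → v i = 0 := by
  intro N
  induction N with
  | zero => intro v _ i hi; omega
  | succ N ih =>
    intro v h
    have hlt : ∀ i, i < N → ((2:ℂ)^i - 2^N) • v i = 0 := by
      apply ih
      intro xx hxx
      have h1 := h xx hxx
      have h2 := h (2 * xx) (mul_ne_zero two_ne_zero hxx)
      have e1 : ∑ i ∈ range (N+1), xx ^ i • (((2:ℂ)^i - 2^N) • v i)
          = (∑ i ∈ range (N+1), (2*xx) ^ i • v i)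
            - (2:ℂ)^N • ∑ i ∈ range (N+1), xx ^ i • v i := by
        rw [Finset.smul_sum, ← Finset.sum_sub_distrib]
        refine Finset.sum_congr rfl fun i _ => ?_
        rw [smul_smul, mul_pow, smul_smul, ← sub_smul]
        congr 1
        ring
      have e2 : ∑ i ∈ range (N+1), xx ^ i • (((2:ℂ)^i - 2^N) • v i) = 0 := by
        rw [e1, h1, h2, smul_zero, sub_zero]
      rw [Finset.sum_range_succ, sub_self, zero_smul, smul_zero, add_zero] at e2
      exact e2
    have hlt' : ∀ i, i < N → v i = 0 := by
      intro i hi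
      have := hlt i hi
      rcases smul_eq_zero.mp this with hc | hv
      · exact absurd hc (two_pow_ne (Nat.ne_of_lt hi))
      · exact hv
    have hN : v N = 0 := by
      have h1 := h 1 one_ne_zero
      rw [Finset.sum_range_succ] at h1
      have hz : ∑ i ∈ range N, (1:ℂ) ^ i • v i = 0 :=
        Finset.sum_eq_zero fun i hi' => by rw [hlt' i (mem_range.mp hi'), smul_zero]
      rw [hz, zero_add, one_pow, one_smul] at h1
      exact h1
    intro i hi
    rcases Nat.lt_succ_iff_lt_or_eq.mp hi with h' | h''
    · exact hlt' i h'
    · rw [h'']; exact hN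

lemma padsum (t : ℂ) (v : ℕ → V) {N M : ℕ} (hNM : N ≤ M) (hv : ∀ i, N ≤ i → v i = 0) :
    ∑ i ∈ range N, t ^ i • v i = ∑ i ∈ range M, t ^ i • v i := by
  apply Finset.sum_subset (Finset.range_subset_range.mpr hNM)
  intro i _ hi
  rw [hv i (le_of_not_gt (by simpa using hi)), smul_zero]

lemma padsum_if (t : ℂ) (v : ℕ → V) {N M : ℕ} (hNM : N ≤ M) :
    ∑ i ∈ range N, t ^ i • v i = ∑ i ∈ range M, t ^ i • (if i < N then v i else 0) := by
  rw [← Finset.sum_subset (Finset.range_subset_range.mpr hNM) (fun i _ hi => by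
    rw [if_neg (by simpa using hi), smul_zero])]
  exact Finset.sum_congr rfl fun i hi => by rw [if_pos (mem_range.mp hi)]

lemma binom {M n : ℕ} (hn : n < M) (s t : ℂ) (w : V) :
    (s + t) ^ n • w = ∑ q ∈ range M, t ^ q • (((n.choose q : ℂ) * s ^ (n - q)) • w) := by
  rw [add_comm s t, add_pow, Finset.sum_smul]
  rw [show ∑ k ∈ range (n+1), (t ^ k * s ^ (n-k) * (n.choose k : ℂ)) • w
      = ∑ k ∈ range (n+1), t ^ k • (((n.choose k : ℂ) * s ^ (n - k)) • w) from
    Finset.sum_congr rfl fun q _ => by rw [smul_smul]; congr 1; ring]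
  apply padsum t (fun q => ((n.choose q : ℂ) * s ^ (n - q)) • w) hn
  intro i hi
  rw [Nat.choose_eq_zero_of_lt hi, Nat.cast_zero, zero_mul, zero_smul]

lemma collect {N M : ℕ} (t : ℂ) (f : ℕ → ℕ → V) :
    ∑ i ∈ range N, ∑ q ∈ range M, t ^ q • f i q
      = ∑ q ∈ range M, t ^ q • ∑ i ∈ range N, f i q := by
  rw [Finset.sum_comm]
  exact Finset.sum_congr rfl fun q _ => (Finset.smul_sum).symm

lemma shiftsum {N : ℕ} (t : ℂ) (g : ℕ → V) :
    t • ∑ q ∈ range N, t ^ q • g q = ∑ q ∈ range (N+1), t ^ q • shf g q := by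
  rw [Finset.sum_range_succ']
  simp only [shf_zero, shf_succ, smul_zero, add_zero, pow_zero]
  rw [Finset.smul_sum]
  exact Finset.sum_congr rfl fun q _ => by rw [smul_smul, pow_succ]; congr 1; ring

lemma sumshift {N : ℕ} (t : ℂ) (g : ℕ → V) :
    ∑ i ∈ range N, t ^ (i+1) • g i = ∑ p ∈ range (N+1), t ^ p • shf g p := by
  rw [Finset.sum_range_succ']
  simp only [shf_zero, shf_succ, smul_zero, add_zero]

lemma constrep {M : ℕ} (hM : 0 < M) (t : ℂ) (c : V) :
    c = ∑ q ∈ range M, t ^ q • (if q = 0 then c else 0) := by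
  rw [Finset.sum_eq_single 0 (fun q _ hq => by rw [if_neg hq, smul_zero])
    (fun h => absurd (mem_range.mpr hM) h)]
  rw [if_pos rfl, pow_zero, one_smul]

lemma linrep {M : ℕ} (hM : 2 ≤ M) (t : ℂ) (c : V) :
    t • c = ∑ q ∈ range M, t ^ q • (if q = 1 then c else 0) := by
  rw [Finset.sum_eq_single 1 (fun q _ hq => by rw [if_neg hq, smul_zero])
    (fun h => absurd (mem_range.mpr hM) h)]
  rw [if_pos rfl, pow_one]

def IsPoly (f : ℂ → V) : Prop :=
  ∃ (J : ℕ) (v : ℕ → V), ∀ t : ℂ, f t = ∑ j ∈ range J, t ^ j • v j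

lemma IsPoly.add {f g : ℂ → V} (hf : IsPoly f) (hg : IsPoly g) :
    IsPoly (fun t => f t + g t) := by
  obtain ⟨J₁, v₁, h₁⟩ := hf
  obtain ⟨J₂, v₂, h₂⟩ := hg
  refine ⟨max J₁ J₂, fun j => (if j < J₁ then v₁ j else 0) + (if j < J₂ then v₂ j else 0),
    fun t => ?_⟩
  show f t + g t = _
  rw [h₁ t, h₂ t, padsum_if t v₁ (le_max_left J₁ J₂), padsum_if t v₂ (le_max_right J₁ J₂),
    ← Finset.sum_add_distrib]
  exact Finset.sum_congr rfl fun j _ => (smul_add _ _ _).symm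

lemma IsPoly.linmap {f : ℂ → V} (T : V →ₗ[ℂ] V) (hf : IsPoly f) :
    IsPoly (fun t => T (f t)) := by
  obtain ⟨J, v, h⟩ := hf
  exact ⟨J, fun j => T (v j), fun t => by
    show T (f t) = _; rw [h t, map_sum]; simp [map_smul]⟩

lemma IsPoly.shift {f : ℂ → V} (hf : IsPoly f) : IsPoly (fun t => t • f t) := by
  obtain ⟨J, v, h⟩ := hf
  refine ⟨J + 1, shf v, fun t => ?_⟩
  show t • f t = _
  rw [h t, shiftsum]

lemma IsPoly.neg {f : ℂ → V} (hf : IsPoly f) : IsPoly (fun t => - f t) := by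
  obtain ⟨J, v, h⟩ := hf
  exact ⟨J, fun j => - v j, fun t => by
    show - f t = _; rw [h t, ← Finset.sum_neg_distrib]; simp⟩

lemma IsPoly.sub {f g : ℂ → V} (hf : IsPoly f) (hg : IsPoly g) :
    IsPoly (fun t => f t - g t) := by
  have := hf.add hg.neg
  simpa [sub_eq_add_neg] using this

lemma IsPoly.zero_of_ne_zero {f : ℂ → V} (hf : IsPoly f) (h : ∀ t : ℂ, t ≠ 0 → f t = 0) :
    ∀ t, f t = 0 := by
  obtain ⟨J, v, hrep⟩ := hf
  have hv : ∀ j, j < J → v j = 0 := polyext J v fun t ht => by rw [← hrep t, h t ht]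
  intro t
  rw [hrep t]
  exact Finset.sum_eq_zero fun j hj => by rw [hv j (mem_range.mp hj), smul_zero]


def T1 (N : ℕ) (l x : ℂ) (β : ℕ → V) (q : ℕ) : V :=
  ∑ i ∈ range N, ((-1:ℂ)^i * (i.choose q : ℂ) * l^(i-q) * x) • β i

def T2 (N : ℕ) (l : ℂ) (γ : ℕ → V) (q : ℕ) : V :=
  ∑ i ∈ range N, ((-1:ℂ)^i * ((i+1).choose q : ℂ) * l^(i+1-q)) • γ i

def T3 (N : ℕ) (x : ℂ) (δ : ℕ → V) (q : ℕ) : V :=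
  ∑ i ∈ range N, ((i.choose q : ℂ) * x^(i-q) * x) • δ i

def T4 (N : ℕ) (x : ℂ) (ε : ℕ → V) (q : ℕ) : V :=
  shf (fun q' => ∑ i ∈ range N, ((i.choose q' : ℂ) * x^(i-q')) • ε i) q

lemma repT1 {N : ℕ} (l x μ : ℂ) (β : ℕ → V) :
    ∑ i ∈ range N, (-l - μ) ^ i • (x • β i)
      = ∑ q ∈ range (N+2), μ ^ q • T1 N l x β q := by
  unfold T1
  rw [← collect]
  refine Finset.sum_congr rfl fun i hi => ?_
  have hiN : i < N + 2 := by have := mem_range.mp hi; omega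
  have step : (-l - μ) ^ i • (x • β i) = (l + μ) ^ i • (((-1:ℂ)^i * x) • β i) := by
    rw [smul_smul, smul_smul]
    congr 1
    rw [show -l - μ = (-1) * (l + μ) by ring, mul_pow]
    ring
  rw [step, binom hiN l μ]
  refine Finset.sum_congr rfl fun q _ => ?_
  module

lemma repT2 {N : ℕ} (l μ : ℂ) (γ : ℕ → V) :
    ∑ i ∈ range N, (-l - μ) ^ i • ((l + μ) • γ i)
      = ∑ q ∈ range (N+2), μ ^ q • T2 N l γ q := by
  unfold T2
  rw [← collect]
  refine Finset.sum_congr rfl fun i hi => ?_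
  have hiN : i + 1 < N + 2 := by have := mem_range.mp hi; omega
  have step : (-l - μ) ^ i • ((l + μ) • γ i) = (l + μ) ^ (i+1) • (((-1:ℂ)^i) • γ i) := by
    rw [smul_smul, smul_smul]
    congr 1
    rw [show -l - μ = (-1) * (l + μ) by ring, mul_pow]
    ring
  rw [step, binom hiN l μ]
  refine Finset.sum_congr rfl fun q _ => ?_
  module

lemma repT3 {N : ℕ} (x μ : ℂ) (δ : ℕ → V) :
    ∑ i ∈ range N, (μ + x) ^ i • (x • δ i)
      = ∑ q ∈ range (N+2), μ ^ q • T3 N x δ q := by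
  unfold T3
  rw [← collect]
  refine Finset.sum_congr rfl fun i hi => ?_
  have hiN : i < N + 2 := by have := mem_range.mp hi; omega
  rw [add_comm μ x, binom hiN x μ]
  refine Finset.sum_congr rfl fun q _ => ?_
  module

lemma repT4 {N : ℕ} (x μ : ℂ) (ε : ℕ → V) :
    ∑ i ∈ range N, (μ + x) ^ i • (μ • ε i)
      = ∑ q ∈ range (N+2), μ ^ q • T4 N x ε q := by
  have h1 : ∑ i ∈ range N, (μ + x) ^ i • (μ • ε i)
      = μ • ∑ i ∈ range N, (μ + x) ^ i • ε i := by
    rw [Finset.smul_sum]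
    exact Finset.sum_congr rfl fun i _ => smul_comm _ _ _
  have h2 : ∑ i ∈ range N, (μ + x) ^ i • ε i
      = ∑ q ∈ range (N+1), μ ^ q • ∑ i ∈ range N, ((i.choose q : ℂ) * x^(i-q)) • ε i := by
    rw [← collect]
    refine Finset.sum_congr rfl fun i hi => ?_
    have hiN : i < N + 1 := by have := mem_range.mp hi; omega
    rw [add_comm μ x, binom hiN x μ]
  rw [h1, h2, shiftsum]
  rfl


lemma hshf_vanish {g : ℕ → V} {N : ℕ} (hg : ∀ i, N ≤ i → g i = 0) :
    ∀ p, N + 1 ≤ p → shf g p = 0 := by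
  intro p hp
  cases p with
  | zero => rfl
  | succ p' => exact hg p' (by omega)

lemma core {N : ℕ} (hN : 2 ≤ N) (l : ℂ) (β γ δ ε B C : ℕ → V)
    (hβ : ∀ i, N ≤ i → β i = 0) (hγ : ∀ i, N ≤ i → γ i = 0)
    (hδ : ∀ i, N ≤ i → δ i = 0) (hε : ∀ i, N ≤ i → ε i = 0)
    (hB : ∀ i, N ≤ i → B i = 0) (hC : ∀ i, N ≤ i → C i = 0)
    (hEq : ∀ x μ : ℂ,
      (x + l) • (∑ i ∈ range N, x ^ i • B i) + μ • (∑ i ∈ range N, x ^ i • C i)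
        = (∑ i ∈ range N, (-l - μ) ^ i • (x • β i + (l + μ) • γ i))
          + (∑ i ∈ range N, (μ + x) ^ i • (x • δ i + μ • ε i))) :
    ((∑ i ∈ range N, ((-1:ℂ) ^ i * l ^ (i+1)) • γ i) = l • B 0)
    ∧ ((∑ i ∈ range N, (-l) ^ i • β i) + δ 0 = B 0 + l • B 1)
    ∧ (∀ n : ℕ, 1 ≤ n → δ n = B n + l • B (n+1))
    ∧ ((∑ i ∈ range N, ((-1:ℂ) ^ i * ((i:ℂ)+1) * l ^ i) • γ i) + ε 0 = C 0)
    ∧ (∀ n : ℕ, 2 ≤ n → (n:ℂ) • δ n + ε n = C n) := by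
  -- Step 1: the bivariate identity in canonical μ-form
  have key : ∀ x μ : ℂ, ∑ q ∈ range (N+2), μ ^ q •
      (T1 N l x β q + T2 N l γ q + T3 N x δ q + T4 N x ε q
        - (if q = 0 then (x+l) • ∑ i ∈ range N, x ^ i • B i else 0)
        - (if q = 1 then ∑ i ∈ range N, x ^ i • C i else 0)) = 0 := by
    intro x μ
    have h := hEq x μ
    have hr : ∑ i ∈ range N, (-l - μ) ^ i • (x • β i + (l + μ) • γ i)
        = (∑ i ∈ range N, (-l - μ) ^ i • (x • β i))
          + (∑ i ∈ range N, (-l - μ) ^ i • ((l + μ) • γ i)) := by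
      rw [← Finset.sum_add_distrib]
      exact Finset.sum_congr rfl fun i _ => smul_add _ _ _
    have hs : ∑ i ∈ range N, (μ + x) ^ i • (x • δ i + μ • ε i)
        = (∑ i ∈ range N, (μ + x) ^ i • (x • δ i))
          + (∑ i ∈ range N, (μ + x) ^ i • (μ • ε i)) := by
      rw [← Finset.sum_add_distrib]
      exact Finset.sum_congr rfl fun i _ => smul_add _ _ _
    have hsplit : ∑ q ∈ range (N+2), μ ^ q •
        (T1 N l x β q + T2 N l γ q + T3 N x δ q + T4 N x ε q
          - (if q = 0 then (x+l) • ∑ i ∈ range N, x ^ i • B i else 0)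
          - (if q = 1 then ∑ i ∈ range N, x ^ i • C i else 0))
        = (∑ q ∈ range (N+2), μ ^ q • T1 N l x β q)
          + (∑ q ∈ range (N+2), μ ^ q • T2 N l γ q)
          + (∑ q ∈ range (N+2), μ ^ q • T3 N x δ q)
          + (∑ q ∈ range (N+2), μ ^ q • T4 N x ε q)
          - (∑ q ∈ range (N+2), μ ^ q • (if q = 0 then (x+l) • ∑ i ∈ range N, x ^ i • B i else 0))
          - (∑ q ∈ range (N+2), μ ^ q • (if q = 1 then ∑ i ∈ range N, x ^ i • C i else 0)) := by
      simp only [smul_add, smul_sub, Finset.sum_add_distrib, Finset.sum_sub_distrib]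
    rw [hsplit, ← repT1, ← repT2, ← repT3, ← repT4,
      ← constrep (show 0 < N+2 by omega) μ ((x+l) • ∑ i ∈ range N, x ^ i • B i),
      ← linrep (show 2 ≤ N+2 by omega) μ (∑ i ∈ range N, x ^ i • C i)]
    rw [hr, hs] at h
    have h2 : (∑ i ∈ range N, (-l - μ) ^ i • (x • β i))
        + (∑ i ∈ range N, (-l - μ) ^ i • ((l + μ) • γ i))
        + (∑ i ∈ range N, (μ + x) ^ i • (x • δ i))
        + (∑ i ∈ range N, (μ + x) ^ i • (μ • ε i))
        = (x + l) • (∑ i ∈ range N, x ^ i • B i) + μ • (∑ i ∈ range N, x ^ i • C i) := by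
      rw [h]; abel
    rw [show (∑ i ∈ range N, (-l - μ) ^ i • (x • β i))
        + (∑ i ∈ range N, (-l - μ) ^ i • ((l + μ) • γ i))
        + (∑ i ∈ range N, (μ + x) ^ i • (x • δ i))
        + (∑ i ∈ range N, (μ + x) ^ i • (μ • ε i))
        - (x + l) • (∑ i ∈ range N, x ^ i • B i) - μ • (∑ i ∈ range N, x ^ i • C i)
        = (x + l) • (∑ i ∈ range N, x ^ i • B i) + μ • (∑ i ∈ range N, x ^ i • C i)
          - (x + l) • (∑ i ∈ range N, x ^ i • B i) - μ • (∑ i ∈ range N, x ^ i • C i) from by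
      rw [h2]]
    abel
  -- Step 2: coefficients in μ vanish
  have hKq : ∀ x : ℂ, ∀ q, q < N + 2 →
      T1 N l x β q + T2 N l γ q + T3 N x δ q + T4 N x ε q
        - (if q = 0 then (x+l) • ∑ i ∈ range N, x ^ i • B i else 0)
        - (if q = 1 then ∑ i ∈ range N, x ^ i • C i else 0) = 0 := by
    intro x
    exact polyext (N+2) _ (fun μ _ => key x μ)
  -- Step 3: q = 0 slice
  set P₁ : V := ∑ i ∈ range N, (-l) ^ i • β i with hP₁
  set c₂ : V := ∑ i ∈ range N, ((-1:ℂ) ^ i * l ^ (i+1)) • γ i with hc₂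
  have hq0 : ∀ x : ℂ, x • P₁ + c₂ + (∑ i ∈ range N, x ^ (i+1) • δ i)
      - (x + l) • (∑ i ∈ range N, x ^ i • B i) = 0 := by
    intro x
    have h := hKq x 0 (by omega)
    have e1 : T1 N l x β 0 = x • P₁ := by
      rw [hP₁, Finset.smul_sum]
      unfold T1
      refine Finset.sum_congr rfl fun i _ => ?_
      simp only [Nat.choose_zero_right, Nat.cast_one, Nat.sub_zero]
      rw [neg_pow]
      module
    have e2 : T2 N l γ 0 = c₂ := by
      rw [hc₂]
      unfold T2
      refine Finset.sum_congr rfl fun i _ => ?_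
      simp only [Nat.choose_zero_right, Nat.cast_one, mul_one, Nat.sub_zero]
    have e3 : T3 N x δ 0 = ∑ i ∈ range N, x ^ (i+1) • δ i := by
      unfold T3
      refine Finset.sum_congr rfl fun i _ => ?_
      simp only [Nat.choose_zero_right, Nat.cast_one, one_mul, Nat.sub_zero]
      rw [← pow_succ]
    have e4 : T4 N x ε 0 = 0 := rfl
    rw [e1, e2, e3, e4, if_pos rfl, if_neg (by omega : (0:ℕ) ≠ 1)] at h
    rw [← h]
    module
  have hrep0 : ∀ x : ℂ, ∑ p ∈ range (N+2), x ^ p •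
      ((if p = 1 then P₁ else 0) + (if p = 0 then c₂ else 0)
        + shf δ p - shf B p - l • B p) = 0 := by
    intro x
    have esplit : ∑ p ∈ range (N+2), x ^ p •
        ((if p = 1 then P₁ else 0) + (if p = 0 then c₂ else 0)
          + shf δ p - shf B p - l • B p)
        = (∑ p ∈ range (N+2), x ^ p • (if p = 1 then P₁ else 0))
          + (∑ p ∈ range (N+2), x ^ p • (if p = 0 then c₂ else 0))
          + (∑ p ∈ range (N+2), x ^ p • shf δ p)
          - (∑ p ∈ range (N+2), x ^ p • shf B p)
          - (∑ p ∈ range (N+2), x ^ p • (l • B p)) := by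
      simp only [smul_add, smul_sub, Finset.sum_add_distrib, Finset.sum_sub_distrib]
    rw [esplit, ← linrep (by omega) x P₁, ← constrep (by omega) x c₂,
      ← padsum x (shf δ) (show N+1 ≤ N+2 by omega) (hshf_vanish hδ),
      ← padsum x (shf B) (show N+1 ≤ N+2 by omega) (hshf_vanish hB),
      ← padsum x (fun p => l • B p) (show N ≤ N+2 by omega)
        (fun i hi => by show l • B i = 0; rw [hB i hi, smul_zero]),
      ← sumshift, ← sumshift]
    have h := hq0 x
    have hxl : (x + l) • (∑ i ∈ range N, x ^ i • B i)
        = (∑ i ∈ range N, x ^ (i+1) • B i) + (∑ i ∈ range N, x ^ i • (l • B i)) := by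
      rw [add_smul]
      congr 1
      · rw [Finset.smul_sum]
        exact Finset.sum_congr rfl fun i _ => by rw [smul_smul, ← pow_succ']
      · rw [Finset.smul_sum]
        exact Finset.sum_congr rfl fun i _ => (smul_comm _ _ _)
    rw [hxl] at h
    rw [← h]
    abel
  have hG0 : ∀ p, p < N+2 → (if p = 1 then P₁ else 0) + (if p = 0 then c₂ else 0)
      + shf δ p - shf B p - l • B p = 0 :=
    polyext (N+2) _ (fun x _ => hrep0 x)
  have c1 : c₂ = l • B 0 := by
    have h := hG0 0 (by omega)
    rw [if_neg (by omega : (0:ℕ) ≠ 1), if_pos rfl, shf_zero, shf_zero] at h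
    rw [← sub_eq_zero, ← h]
    module
  have c2 : P₁ + δ 0 = B 0 + l • B 1 := by
    have h := hG0 1 (by omega)
    rw [if_pos rfl, if_neg one_ne_zero, shf_one, shf_one] at h
    rw [← sub_eq_zero, ← h]
    module
  have c3 : ∀ n : ℕ, 1 ≤ n → δ n = B n + l • B (n+1) := by
    intro n hn
    by_cases hcase : n + 1 < N + 2
    · have h := hG0 (n+1) hcase
      rw [if_neg (by omega), if_neg (by omega), shf_succ, shf_succ] at h
      rw [← sub_eq_zero, ← h]
      module
    · rw [hδ n (by omega), hB n (by omega), hB (n+1) (by omega)]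
      simp
  -- Step 4: q = 1 slice
  set P₂ : V := ∑ i ∈ range N, ((-1:ℂ) ^ i * (i:ℂ) * l ^ (i-1)) • β i with hP₂
  set c₃ : V := ∑ i ∈ range N, ((-1:ℂ) ^ i * ((i:ℂ)+1) * l ^ i) • γ i with hc₃
  have hq1 : ∀ x : ℂ, x • P₂ + c₃ + (∑ i ∈ range N, x ^ i • ((i:ℂ) • δ i))
      + (∑ i ∈ range N, x ^ i • ε i) - (∑ i ∈ range N, x ^ i • C i) = 0 := by
    intro x
    have h := hKq x 1 (by omega)
    have e1 : T1 N l x β 1 = x • P₂ := by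
      rw [hP₂, Finset.smul_sum]
      unfold T1
      refine Finset.sum_congr rfl fun i _ => ?_
      simp only [Nat.choose_one_right]
      module
    have e2 : T2 N l γ 1 = c₃ := by
      rw [hc₃]
      unfold T2
      refine Finset.sum_congr rfl fun i _ => ?_
      simp only [Nat.choose_one_right, Nat.add_sub_cancel]
      push_cast
      ring_nf
    have e3 : T3 N x δ 1 = ∑ i ∈ range N, x ^ i • ((i:ℂ) • δ i) := by
      unfold T3
      refine Finset.sum_congr rfl fun i _ => ?_
      cases i with
      | zero => simp
      | succ j =>
        simp only [Nat.choose_one_right, Nat.add_sub_cancel]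
        module
    have e4 : T4 N x ε 1 = ∑ i ∈ range N, x ^ i • ε i := by
      unfold T4
      rw [shf_one]
      refine Finset.sum_congr rfl fun i _ => ?_
      simp only [Nat.choose_zero_right, Nat.cast_one, one_mul, Nat.sub_zero]
    rw [e1, e2, e3, e4, if_neg one_ne_zero, if_pos rfl] at h
    rw [← h]
    module
  have hrep1 : ∀ x : ℂ, ∑ p ∈ range (N+2), x ^ p •
      ((if p = 1 then P₂ else 0) + (if p = 0 then c₃ else 0)
        + (p:ℂ) • δ p + ε p - C p) = 0 := by
    intro x
    have esplit : ∑ p ∈ range (N+2), x ^ p •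
        ((if p = 1 then P₂ else 0) + (if p = 0 then c₃ else 0)
          + (p:ℂ) • δ p + ε p - C p)
        = (∑ p ∈ range (N+2), x ^ p • (if p = 1 then P₂ else 0))
          + (∑ p ∈ range (N+2), x ^ p • (if p = 0 then c₃ else 0))
          + (∑ p ∈ range (N+2), x ^ p • ((p:ℂ) • δ p))
          + (∑ p ∈ range (N+2), x ^ p • ε p)
          - (∑ p ∈ range (N+2), x ^ p • C p) := by
      simp only [smul_add, smul_sub, Finset.sum_add_distrib, Finset.sum_sub_distrib]
    rw [esplit, ← linrep (by omega) x P₂, ← constrep (by omega) x c₃,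
      ← padsum x (fun p => (p:ℂ) • δ p) (show N ≤ N+2 by omega)
        (fun i hi => by show (i:ℂ) • δ i = 0; rw [hδ i hi, smul_zero]),
      ← padsum x ε (show N ≤ N+2 by omega) hε,
      ← padsum x C (show N ≤ N+2 by omega) hC]
    exact hq1 x
  have hG1 : ∀ p, p < N+2 → (if p = 1 then P₂ else 0) + (if p = 0 then c₃ else 0)
      + (p:ℂ) • δ p + ε p - C p = 0 :=
    polyext (N+2) _ (fun x _ => hrep1 x)
  have c4 : c₃ + ε 0 = C 0 := by
    have h := hG1 0 (by omega)
    rw [if_neg (by omega : (0:ℕ) ≠ 1), if_pos rfl, Nat.cast_zero, zero_smul] at h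
    rw [← sub_eq_zero, ← h]
    module
  have c5 : ∀ n : ℕ, 2 ≤ n → (n:ℂ) • δ n + ε n = C n := by
    intro n hn
    by_cases hcase : n < N + 2
    · have h := hG1 n hcase
      rw [if_neg (by omega), if_neg (by omega)] at h
      rw [← sub_eq_zero, ← h]
      module
    · rw [hδ n (by omega), hε n (by omega), hC n (by omega)]
      simp
  exact ⟨c1, c2, c3, c4, c5⟩


lemma trunc2 {N : ℕ} (hN : 2 ≤ N) (g : ℕ → V) (hg : ∀ i, 2 ≤ i → g i = 0) :
    ∑ i ∈ range N, g i = g 0 + g 1 := by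
  rw [show g 0 + g 1 = ∑ i ∈ range 2, g i by
    rw [Finset.sum_range_succ, Finset.sum_range_one]]
  exact (Finset.sum_subset (Finset.range_subset_range.mpr hN)
    (fun i _ hi => hg i (le_of_not_gt (by simpa using hi)))).symm

lemma extract (circ : V →ₗ[ℂ] V →ₗ[ℂ] V) (d : ℕ → V →ₗ[ℂ] (ℂ → V))
    (hfin : ∀ a : V, {i : ℕ | d i a ≠ 0}.Finite)
    (hE : ConfDerEqNov circ d) (a b : V) :
    ∃ N : ℕ, 2 ≤ N
      ∧ (∀ i, N ≤ i → d i a = 0 ∧ d i b = 0 ∧ d i (circ b a) = 0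
          ∧ d i (circ a b + circ b a) = 0)
      ∧ ∀ l : ℂ,
        ((∑ i ∈ range N, ((-1:ℂ)^i * l^(i+1)) • (circ (d i a l) b + circ b (d i a l)))
            = l • d 0 (circ b a) l)
        ∧ ((∑ i ∈ range N, (-l)^i • circ b (d i a l)) + circ (d 0 b l) a
            = d 0 (circ b a) l + l • d 1 (circ b a) l)
        ∧ (∀ n : ℕ, 1 ≤ n → circ (d n b l) a
            = d n (circ b a) l + l • d (n+1) (circ b a) l)
        ∧ ((∑ i ∈ range N, ((-1:ℂ)^i * ((i:ℂ)+1) * l^i) • (circ (d i a l) b + circ b (d i a l)))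
            + (circ (d 0 b l) a + circ a (d 0 b l))
            = d 0 (circ a b + circ b a) l)
        ∧ (∀ n : ℕ, 2 ≤ n → (n:ℂ) • circ (d n b l) a + (circ (d n b l) a + circ a (d n b l))
            = d n (circ a b + circ b a) l) := by
  classical
  set s : Finset ℕ := ((hfin a).toFinset ∪ (hfin b).toFinset ∪ (hfin (circ b a)).toFinset
    ∪ (hfin (circ a b + circ b a)).toFinset) with hs
  set N : ℕ := s.sup id + 2 with hNdef
  have hsupp : ∀ i, N ≤ i → d i a = 0 ∧ d i b = 0 ∧ d i (circ b a) = 0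
      ∧ d i (circ a b + circ b a) = 0 := by
    intro i hi
    have hnotin : i ∉ s := by
      intro hin
      have h1 : id i ≤ s.sup id := Finset.le_sup hin
      simp only [id] at h1
      omega
    have key : ∀ v : V, i ∈ (hfin v).toFinset → i ∈ s → False := fun v hv hvs => hnotin hvs
    refine ⟨?_, ?_, ?_, ?_⟩ <;> by_contra hne
    · exact hnotin (by
        rw [hs]
        exact Finset.mem_union_left _ (Finset.mem_union_left _ (Finset.mem_union_left _
          ((Set.Finite.mem_toFinset _).mpr hne))))
    · exact hnotin (by
        rw [hs]
        exact Finset.mem_union_left _ (Finset.mem_union_left _ (Finset.mem_union_right _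
          ((Set.Finite.mem_toFinset _).mpr hne))))
    · exact hnotin (by
        rw [hs]
        exact Finset.mem_union_left _ (Finset.mem_union_right _
          ((Set.Finite.mem_toFinset _).mpr hne)))
    · exact hnotin (by
        rw [hs]
        exact Finset.mem_union_right _ ((Set.Finite.mem_toFinset _).mpr hne))
  refine ⟨N, by omega, hsupp, ?_⟩
  intro l
  have hβ : ∀ i, N ≤ i → circ b (d i a l) = 0 := fun i hi => by
    rw [(hsupp i hi).1]; simp
  have hγ : ∀ i, N ≤ i → circ (d i a l) b + circ b (d i a l) = 0 := fun i hi => by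
    rw [(hsupp i hi).1]; simp
  have hδ : ∀ i, N ≤ i → circ (d i b l) a = 0 := fun i hi => by
    rw [(hsupp i hi).2.1]; simp
  have hε : ∀ i, N ≤ i → circ (d i b l) a + circ a (d i b l) = 0 := fun i hi => by
    rw [(hsupp i hi).2.1]; simp
  have hB : ∀ i, N ≤ i → d i (circ b a) l = 0 := fun i hi => by
    rw [(hsupp i hi).2.2.1]; simp
  have hC : ∀ i, N ≤ i → d i (circ a b + circ b a) l = 0 := fun i hi => by
    rw [(hsupp i hi).2.2.2]; simp
  have hEq : ∀ x μ : ℂ,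
      (x + l) • (∑ i ∈ range N, x ^ i • d i (circ b a) l)
        + μ • (∑ i ∈ range N, x ^ i • d i (circ a b + circ b a) l)
      = (∑ i ∈ range N, (-l - μ) ^ i •
          (x • circ b (d i a l) + (l + μ) • (circ (d i a l) b + circ b (d i a l))))
        + (∑ i ∈ range N, (μ + x) ^ i •
          (x • circ (d i b l) a + μ • (circ (d i b l) a + circ a (d i b l)))) := by
    intro x μ
    have h := hE a b l μ x
    have fs1 : ∑ᶠ i : ℕ, x ^ i • d i (circ b a) l
        = ∑ i ∈ range N, x ^ i • d i (circ b a) l := by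
      apply finsum_eq_finset_sum_of_support_subset
      intro i hi
      simp only [Function.mem_support] at hi
      simp only [Finset.coe_range, Set.mem_Iio]
      by_contra h'
      exact hi (by rw [hB i (by omega)]; simp)
    have fs2 : ∑ᶠ i : ℕ, x ^ i • d i (circ a b + circ b a) l
        = ∑ i ∈ range N, x ^ i • d i (circ a b + circ b a) l := by
      apply finsum_eq_finset_sum_of_support_subset
      intro i hi
      simp only [Function.mem_support] at hi
      simp only [Finset.coe_range, Set.mem_Iio]
      by_contra h'
      exact hi (by rw [hC i (by omega)]; simp)
    have fs3 : ∑ᶠ i : ℕ, (-l - μ) ^ i •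
        (x • circ b (d i a l) + (l + μ) • (circ (d i a l) b + circ b (d i a l)))
        = ∑ i ∈ range N, (-l - μ) ^ i •
          (x • circ b (d i a l) + (l + μ) • (circ (d i a l) b + circ b (d i a l))) := by
      apply finsum_eq_finset_sum_of_support_subset
      intro i hi
      simp only [Function.mem_support] at hi
      simp only [Finset.coe_range, Set.mem_Iio]
      by_contra h'
      exact hi (by rw [(hsupp i (by omega)).1]; simp)
    have fs4 : ∑ᶠ i : ℕ, (μ + x) ^ i •
        (x • circ (d i b l) a + μ • (circ (d i b l) a + circ a (d i b l)))
        = ∑ i ∈ range N, (μ + x) ^ i •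
          (x • circ (d i b l) a + μ • (circ (d i b l) a + circ a (d i b l))) := by
      apply finsum_eq_finset_sum_of_support_subset
      intro i hi
      simp only [Function.mem_support] at hi
      simp only [Finset.coe_range, Set.mem_Iio]
      by_contra h'
      exact hi (by rw [(hsupp i (by omega)).2.1]; simp)
    rw [fs1, fs2, fs3, fs4] at h
    exact h
  exact core (by omega) l _ _ _ _ _ _ hβ hγ hδ hε hB hC hEq


end Stmt14Aux

/-- Let `(V,∘)` be a Novikov algebra over `ℂ` (possibly
infinite-dimensional, with trivial Lie bracket) with an element `x` and `k ≠ 0` such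
that `x∘b = k·b` for all `b`.  If `(d^i)_{i∈ℕ}` is a pointwise finitely supported
family of linear maps from `V` into the space of polynomial maps `ℂ → V` satisfying
the Novikov conformal derivation equation (E₀), then `d^i = 0` for all `i ≥ 2` and
(H1)–(H4) hold. -/
theorem stmt_14 {V : Type*} [AddCommGroup V] [Module ℂ V]
    (circ : V →ₗ[ℂ] V →ₗ[ℂ] V)
    -- Novikov algebra axioms for `∘ = circ`
    (hNov1 : ∀ a b c : V, circ (circ a b) c - circ a (circ b c)
      = circ (circ b a) c - circ b (circ a c))
    (hNov2 : ∀ a b c : V, circ (circ a b) c = circ (circ a c) b)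
    -- an element `x` with `x∘b = k·b` for all `b`, `k ≠ 0`
    (x : V) (k : ℂ) (hk : k ≠ 0) (hx : ∀ b : V, circ x b = k • b)
    (d : ℕ → V →ₗ[ℂ] (ℂ → V))
    -- pointwise finite support in `i`
    (hfin : ∀ a : V, {i : ℕ | d i a ≠ 0}.Finite)
    -- each `d^i(a)` is a polynomial map `ℂ → V`
    (hpoly : ∀ (i : ℕ) (a : V), ∃ (N : ℕ) (v : ℕ → V),
      ∀ t : ℂ, d i a t = ∑ j ∈ Finset.range N, t ^ j • v j)
    (hE : ConfDerEqNov circ d) :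
    -- `d^i = 0` for all `i ≥ 2`
    (∀ i : ℕ, 2 ≤ i → d i = 0)
    -- (H1)
    ∧ (∀ (a b : V) (l : ℂ), d 1 (circ b a) l = circ (d 1 b l) a)
    -- (H2)
    ∧ (∀ (a b : V) (l : ℂ),
        circ (d 1 a l) b + circ b (d 1 a l) = circ (d 1 b l) a + circ a (d 1 b l))
    -- (H3)
    ∧ (∀ (a b : V) (l : ℂ),
        d 0 (circ b a) l + l • d 1 (circ b a) l
          = circ b (d 0 a l) - l • circ b (d 1 a l) + circ (d 0 b l) a)
    -- (H4)
    ∧ (∀ (a b : V) (l : ℂ),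
        circ (d 0 b l) a - l • d 1 (circ b a) l
          = circ (d 0 a l) b - l • circ (d 1 a l) b) := by
  classical
  have hext := Stmt14Aux.extract circ d hfin hE
  have hS : ∀ (a b : V) (l : ℂ) (n : ℕ), 1 ≤ n →
      circ (d n b l) a = d n (circ b a) l + l • d (n+1) (circ b a) l := by
    intro a b l n hn
    obtain ⟨N, hN, hsupp, hl⟩ := hext a b
    exact (hl l).2.2.1 n hn
  have hR : ∀ (a b : V) (l : ℂ) (n : ℕ), 2 ≤ n →
      (n:ℂ) • circ (d n b l) a + (circ (d n b l) a + circ a (d n b l))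
        = d n (circ a b + circ b a) l := by
    intro a b l n hn
    obtain ⟨N, hN, hsupp, hl⟩ := hext a b
    exact (hl l).2.2.2.2 n hn
  -- Part 1: d^n = 0 for n ≥ 2
  have hdzero : ∀ n : ℕ, 2 ≤ n → ∀ v : V, d n v = 0 := by
    intro n hn v
    have step : ∀ m : ℕ, 2 ≤ m →
        (d (m+1) v = 0 ∧ d (m+1) x = 0 ∧ d (m+1) (circ v x) = 0) →
        (d m v = 0 ∧ d m x = 0 ∧ d m (circ v x) = 0) := by
      rintro m hm ⟨hv1, hx1, hvx1⟩
      have hdx : d m x = 0 := by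
        funext l
        show d m x l = 0
        have S := hS x x l m (by omega)
        have R := hR x x l m hm
        rw [hx x] at S R
        have e1 : d m (k • x) l = k • d m x l := by rw [map_smul]; rfl
        have e2 : d (m+1) (k • x) l = 0 := by rw [map_smul, hx1]; simp
        rw [e1, e2, smul_zero, add_zero] at S
        -- S : circ (d m x l) x = k • d m x l
        have e3 : d m (k • x + k • x) l = k • d m x l + k • d m x l := by
          rw [map_add, map_smul]
          simp [Pi.add_apply]
        rw [e3, S, hx (d m x l)] at R
        -- R : (m:ℂ) • (k • d m x l) + (k • d m x l + k • d m x l) = k • d m x l + k • d m x l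
        have hmk : ((m:ℂ) * k) • d m x l = 0 := by
          linear_combination (norm := module) R
        rcases smul_eq_zero.mp hmk with h0 | h0
        · exact absurd h0 (mul_ne_zero (Nat.cast_ne_zero.mpr (by omega)) hk)
        · exact h0
      have hdv : d m v = 0 := by
        funext l
        show d m v l = 0
        have S := hS v x l m (by omega)
        rw [hx v, hdx] at S
        -- S : circ ((0:ℂ→V) l) v = d m (k • v) l + l • d (m+1) (k • v) l
        have e1 : d m (k • v) l = k • d m v l := by rw [map_smul]; rfl
        have e2 : d (m+1) (k • v) l = 0 := by rw [map_smul, hv1]; simp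
        rw [e1, e2, smul_zero, add_zero] at S
        simp only [Pi.zero_apply, map_zero, LinearMap.zero_apply] at S
        rcases smul_eq_zero.mp S.symm with h0 | h0
        · exact absurd h0 hk
        · exact h0
      have hdvx : d m (circ v x) = 0 := by
        funext l
        show d m (circ v x) l = 0
        have S := hS x v l m (by omega)
        rw [hdv] at S
        simp only [Pi.zero_apply, map_zero, LinearMap.zero_apply] at S
        -- S : 0 = d m (circ v x) l + l • d (m+1) (circ v x) l
        rw [hvx1] at S
        simp only [Pi.zero_apply, smul_zero, add_zero] at S
        exact S.symm
      exact ⟨hdv, hdx, hdvx⟩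
    have hbase : ∃ N₀ : ℕ, ∀ m, N₀ ≤ m → (d m v = 0 ∧ d m x = 0 ∧ d m (circ v x) = 0) := by
      set s : Finset ℕ := (hfin v).toFinset ∪ (hfin x).toFinset ∪ (hfin (circ v x)).toFinset
        with hs
      refine ⟨s.sup id + 1, fun m hm => ?_⟩
      have hnotin : m ∉ s := by
        intro hin
        have h1 : id m ≤ s.sup id := Finset.le_sup hin
        simp only [id] at h1
        omega
      refine ⟨?_, ?_, ?_⟩ <;> by_contra hne
      · exact hnotin (by
          rw [hs]
          exact Finset.mem_union_left _ (Finset.mem_union_left _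
            ((Set.Finite.mem_toFinset _).mpr hne)))
      · exact hnotin (by
          rw [hs]
          exact Finset.mem_union_left _ (Finset.mem_union_right _
            ((Set.Finite.mem_toFinset _).mpr hne)))
      · exact hnotin (by
          rw [hs]
          exact Finset.mem_union_right _ ((Set.Finite.mem_toFinset _).mpr hne))
    obtain ⟨N₀, hN₀⟩ := hbase
    have main : ∀ j : ℕ, ∀ m : ℕ, 2 ≤ m → N₀ ≤ m + j →
        (d m v = 0 ∧ d m x = 0 ∧ d m (circ v x) = 0) := by
      intro j
      induction j with
      | zero => intro m hm hle; exact hN₀ m (by omega)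
      | succ j ih =>
        intro m hm hle
        by_cases hc : N₀ ≤ m
        · exact hN₀ m hc
        · exact step m hm (ih (m+1) (by omega) (by omega))
    exact (main N₀ n hn (by omega)).1
  have hd2 : ∀ i : ℕ, 2 ≤ i → d i = 0 := fun i hi => LinearMap.ext fun v => hdzero i hi v
  -- H1
  have H1 : ∀ (a b : V) (l : ℂ), d 1 (circ b a) l = circ (d 1 b l) a := by
    intro a b l
    have S := hS a b l 1 le_rfl
    rw [show (1:ℕ)+1 = 2 from rfl, hd2 2 le_rfl] at S
    simp only [LinearMap.zero_apply, Pi.zero_apply, smul_zero, add_zero] at S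
    exact S.symm
  -- A0'
  have A0' : ∀ (a b : V) (l : ℂ), d 0 (circ b a) l
      = (circ (d 0 a l) b + circ b (d 0 a l))
        - l • (circ (d 1 a l) b + circ b (d 1 a l)) := by
    intro a b
    have pa0 : Stmt14Aux.IsPoly (fun l : ℂ => d 0 a l) := hpoly 0 a
    have pa1 : Stmt14Aux.IsPoly (fun l : ℂ => d 1 a l) := hpoly 1 a
    have pba : Stmt14Aux.IsPoly (fun l : ℂ => d 0 (circ b a) l) := hpoly 0 (circ b a)
    have q2 : Stmt14Aux.IsPoly (fun l : ℂ => circ (d 0 a l) b + circ b (d 0 a l)) :=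
      (pa0.linmap (circ.flip b)).add (pa0.linmap (circ b))
    have q3 : Stmt14Aux.IsPoly (fun l : ℂ => circ (d 1 a l) b + circ b (d 1 a l)) :=
      (pa1.linmap (circ.flip b)).add (pa1.linmap (circ b))
    have hpol : Stmt14Aux.IsPoly (fun l : ℂ => d 0 (circ b a) l
        - ((circ (d 0 a l) b + circ b (d 0 a l))
          - l • (circ (d 1 a l) b + circ b (d 1 a l)))) :=
      pba.sub (q2.sub q3.shift)
    have hvan : ∀ l : ℂ, l ≠ 0 → d 0 (circ b a) l
        - ((circ (d 0 a l) b + circ b (d 0 a l))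
          - l • (circ (d 1 a l) b + circ b (d 1 a l))) = 0 := by
      intro l hl0
      obtain ⟨N, hN, hsupp, hl⟩ := hext a b
      have hc1 := (hl l).1
      rw [Stmt14Aux.trunc2 hN _ (fun i hi => by rw [hd2 i hi]; simp)] at hc1
      norm_num at hc1
      -- hc1 : l • (circ (d 0 a l) b + circ b (d 0 a l))
      --        - l^2 • (circ (d 1 a l) b + circ b (d 1 a l)) = l • d 0 (circ b a) l
      have key : l • (d 0 (circ b a) l
          - ((circ (d 0 a l) b + circ b (d 0 a l))
            - l • (circ (d 1 a l) b + circ b (d 1 a l)))) = 0 := by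
        linear_combination (norm := module) -hc1
      rcases smul_eq_zero.mp key with h0 | h0
      · exact absurd h0 hl0
      · exact h0
    intro l
    have := hpol.zero_of_ne_zero hvan l
    linear_combination (norm := module) this
  -- H3
  have H3 : ∀ (a b : V) (l : ℂ),
      d 0 (circ b a) l + l • d 1 (circ b a) l
        = circ b (d 0 a l) - l • circ b (d 1 a l) + circ (d 0 b l) a := by
    intro a b l
    obtain ⟨N, hN, hsupp, hl⟩ := hext a b
    have hc2 := (hl l).2.1
    rw [Stmt14Aux.trunc2 hN _ (fun i hi => by rw [hd2 i hi]; simp)] at hc2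
    norm_num at hc2
    linear_combination (norm := module) -hc2
  -- H2
  have H2 : ∀ (a b : V) (l : ℂ),
      circ (d 1 a l) b + circ b (d 1 a l) = circ (d 1 b l) a + circ a (d 1 b l) := by
    intro a b
    have pa1 : Stmt14Aux.IsPoly (fun l : ℂ => d 1 a l) := hpoly 1 a
    have pb1 : Stmt14Aux.IsPoly (fun l : ℂ => d 1 b l) := hpoly 1 b
    have hpol : Stmt14Aux.IsPoly (fun l : ℂ => (circ (d 1 a l) b + circ b (d 1 a l))
        - (circ (d 1 b l) a + circ a (d 1 b l))) :=
      ((pa1.linmap (circ.flip b)).add (pa1.linmap (circ b))).sub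
        ((pb1.linmap (circ.flip a)).add (pb1.linmap (circ a)))
    have hvan : ∀ l : ℂ, l ≠ 0 → (circ (d 1 a l) b + circ b (d 1 a l))
        - (circ (d 1 b l) a + circ a (d 1 b l)) = 0 := by
      intro l hl0
      obtain ⟨N, hN, hsupp, hl⟩ := hext a b
      have hc4 := (hl l).2.2.2.1
      rw [Stmt14Aux.trunc2 hN _ (fun i hi => by rw [hd2 i hi]; simp)] at hc4
      norm_num at hc4
      rw [A0' a b l, A0' b a l] at hc4
      have key : l • ((circ (d 1 a l) b + circ b (d 1 a l))
          - (circ (d 1 b l) a + circ a (d 1 b l))) = 0 := by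
        linear_combination (norm := module) -hc4
      rcases smul_eq_zero.mp key with h0 | h0
      · exact absurd h0 hl0
      · exact h0
    intro l
    have := hpol.zero_of_ne_zero hvan l
    linear_combination (norm := module) this
  -- H4
  have H4 : ∀ (a b : V) (l : ℂ),
      circ (d 0 b l) a - l • d 1 (circ b a) l
        = circ (d 0 a l) b - l • circ (d 1 a l) b := by
    intro a b l
    have e2 := H3 a b l
    rw [A0' a b l] at e2
    linear_combination (norm := module) -e2
  exact ⟨hd2, H1, H2, H3, H4⟩
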